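/- arXiv:2112.13812 — 3 statements merged into one kernel-verified Lean document; each statement's English description precedes it below -/
import Mathlib

section
/- There exists a unique φ_* ∈ (0,1) such that F_log'(φ_*) = 0, where F_log'(s) = (θ/2)[ln(1+s) - ln(1-s)] - θ_c s is the derivative of F_log. Moreover, this positive root satisfies (1 - θ/θ_c)^{1/2} < φ_* < 1. -/
/-- The first derivative of the logarithmic (Flory–Huggins) potential
`F_log(s) = (θ/2)[(1+s)ln(1+s) + (1-s)ln(1-s)] - (θ_c/2)s²`, namely
`F_log'(s) = (θ/2)[ln(1+s) - ln(1-s)] - θ_c s`. -/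
noncomputable def FlogD (θ θc s : ℝ) : ℝ :=
  θ / 2 * (Real.log (1 + s) - Real.log (1 - s)) - θc * s

/-!
`F_log'` vanishes at `0`, and its derivative `θ / (1 - s²) - θ_c` is negative for
`s² < 1 - θ/θ_c` and positive beyond. Hence `F_log'` decreases strictly from `0` on
`[0, √(1 - θ/θ_c)]` and then increases strictly on `[√(1 - θ/θ_c), 1)`, tending to `+∞` at `1⁻`
because of the term `-(θ/2) ln(1 - s)`. So it has no zero in `(0, √(1 - θ/θ_c)]` and exactly
one in `(√(1 - θ/θ_c), 1)`.
-/

open Set Filter Topology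

namespace FlogD

variable {θ θc : ℝ}

@[simp]
theorem apply_zero : FlogD θ θc 0 = 0 := by
  simp [FlogD]

theorem hasDerivAt {s : ℝ} (hs : s ∈ Ioo (-1 : ℝ) 1) :
    HasDerivAt (FlogD θ θc) (θ / (1 - s ^ 2) - θc) s := by
  obtain ⟨hs₁, hs₂⟩ := hs
  have hplus : HasDerivAt (fun x : ℝ => Real.log (1 + x)) (1 / (1 + s)) s := by
    simpa using ((hasDerivAt_id' s).const_add 1).log (by linarith)
  have hminus : HasDerivAt (fun x : ℝ => Real.log (1 - x)) (-1 / (1 - s)) s := by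
    simpa using ((hasDerivAt_id' s).const_sub 1).log (by linarith)
  have h₁ : (1 : ℝ) + s ≠ 0 := by linarith
  have h₂ : (1 : ℝ) - s ≠ 0 := by linarith
  have h₃ : (1 : ℝ) - s ^ 2 ≠ 0 := by nlinarith
  refine (((hplus.sub hminus).const_mul (θ / 2)).sub
    ((hasDerivAt_id' s).const_mul θc)).congr_deriv ?_
  field_simp
  ring

theorem continuousOn_Ioo : ContinuousOn (FlogD θ θc) (Ioo (-1) 1) := fun _ hs =>
  (hasDerivAt hs).continuousAt.continuousWithinAt

theorem sqrt_one_sub_div_lt_one (hθ : 0 < θ) (hθc : 0 < θc) : √(1 - θ / θc) < 1 := by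
  rw [Real.sqrt_lt' one_pos]
  linarith [div_pos hθ hθc]

theorem strictAntiOn_Icc (hθ : 0 < θ) (hθc : 0 < θc) :
    StrictAntiOn (FlogD θ θc) (Icc 0 √(1 - θ / θc)) := by
  have hsub : Icc 0 √(1 - θ / θc) ⊆ Ioo (-1) 1 :=
    Icc_subset_Ioo (by norm_num) (sqrt_one_sub_div_lt_one hθ hθc)
  refine strictAntiOn_of_deriv_neg (convex_Icc _ _) (continuousOn_Ioo.mono hsub) fun x hx => ?_
  rw [interior_Icc] at hx
  have hx_sq : x ^ 2 < 1 - θ / θc := (Real.lt_sqrt hx.1.le).1 hx.2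
  have hpos : 0 < 1 - x ^ 2 := by linarith [div_pos hθ hθc]
  rw [(hasDerivAt (hsub (Ioo_subset_Icc_self hx))).deriv, sub_neg, div_lt_iff₀ hpos]
  rw [lt_sub_comm, div_lt_iff₀ hθc] at hx_sq
  linarith

theorem strictMonoOn_Ico (hθc : 0 < θc) :
    StrictMonoOn (FlogD θ θc) (Ico √(1 - θ / θc) 1) := by
  have hsub : Ico √(1 - θ / θc) 1 ⊆ Ioo (-1) 1 :=
    Ico_subset_Ioo_left (by linarith [Real.sqrt_nonneg (1 - θ / θc)])
  refine strictMonoOn_of_deriv_pos (convex_Ico _ _) (continuousOn_Ioo.mono hsub) fun x hx => ?_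
  rw [interior_Ico] at hx
  have hx_pos : 0 < x := (Real.sqrt_nonneg _).trans_lt hx.1
  have hx_sq : 1 - θ / θc < x ^ 2 := (Real.sqrt_lt' hx_pos).1 hx.1
  have hpos : 0 < 1 - x ^ 2 := by nlinarith [hx.2]
  rw [(hasDerivAt (hsub (Ioo_subset_Ico_self hx))).deriv, sub_pos, lt_div_iff₀ hpos]
  rw [sub_lt_comm, lt_div_iff₀ hθc] at hx_sq
  linarith

theorem neg_of_mem_Ioc (hθ : 0 < θ) (hθc : 0 < θc) {s : ℝ} (hs : s ∈ Ioc 0 √(1 - θ / θc)) :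
    FlogD θ θc s < 0 := by
  simpa using strictAntiOn_Icc hθ hθc (left_mem_Icc.2 (hs.1.le.trans hs.2)) (Ioc_subset_Icc_self hs)
    hs.1

theorem tendsto_atTop_nhdsLT_one (hθ : 0 < θ) : Tendsto (FlogD θ θc) (𝓝[<] 1) atTop := by
  have hbounded : Tendsto (fun s : ℝ => θ / 2 * Real.log (1 + s) - θc * s) (𝓝[<] 1)
      (𝓝 (θ / 2 * Real.log (1 + 1) - θc * 1)) := by
    refine (ContinuousAt.tendsto ?_).mono_left nhdsWithin_le_nhds
    have : ContinuousAt (fun s : ℝ => Real.log (1 + s)) 1 :=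
      (continuousAt_const.add continuousAt_id).log (by norm_num)
    fun_prop
  have hone_sub : Tendsto (fun s : ℝ => 1 - s) (𝓝[<] 1) (𝓝[>] 0) := by
    have h : Tendsto (fun s : ℝ => 1 - s) (𝓝[<] 1) (𝓝[>] (1 - 1)) := map_subLeft_nhdsLT.le
    rwa [sub_self] at h
  have hsingular : Tendsto (fun s : ℝ => θ / 2 * -Real.log (1 - s)) (𝓝[<] 1) atTop :=
    (tendsto_neg_atBot_atTop.comp (Real.tendsto_log_nhdsGT_zero.comp hone_sub)).const_mul_atTop
      (by positivity)
  refine (hbounded.add_atTop hsingular).congr fun s => ?_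
  simp only [FlogD]
  ring

theorem exists_eq_zero_mem_Ioo (hθ : 0 < θ) (hθc : θ < θc) :
    ∃ p ∈ Ioo √(1 - θ / θc) 1, FlogD θ θc p = 0 := by
  have hθc0 : 0 < θc := hθ.trans hθc
  set a := √(1 - θ / θc)
  have ha : 0 < a := Real.sqrt_pos.2 (by linarith [(div_lt_one hθc0).2 hθc])
  have ha1 : a < 1 := sqrt_one_sub_div_lt_one hθ hθc0
  have hfa : FlogD θ θc a < 0 := neg_of_mem_Ioc hθ hθc0 ⟨ha, le_rfl⟩
  obtain ⟨b, hfb, hab, hb⟩ : ∃ b, 0 < FlogD θ θc b ∧ a < b ∧ b < 1 :=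
    ((tendsto_atTop_nhdsLT_one hθ).eventually_gt_atTop 0 |>.and <|
      (eventually_nhdsWithin_of_eventually_nhds (eventually_gt_nhds ha1)).and
        self_mem_nhdsWithin).exists
  have hcont : ContinuousOn (FlogD θ θc) (Icc a b) :=
    continuousOn_Ioo.mono (Icc_subset_Ioo (by linarith) hb)
  obtain ⟨p, hp, hfp⟩ := intermediate_value_Ioo hab.le hcont ⟨hfa, hfb⟩
  exact ⟨p, ⟨hp.1, hp.2.trans hb⟩, hfp⟩

end FlogD

/-- There exists a unique `φ_* ∈ (0,1)` with `F_log'(φ_*) = 0`, and this positive root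
satisfies `(1 - θ/θ_c)^{1/2} < φ_* < 1`. -/
theorem stmt1 (θ θc : ℝ) (hθ : 0 < θ) (hθc : θ < θc) :
    ∃ p : ℝ, p ∈ Set.Ioo (0 : ℝ) 1 ∧ FlogD θ θc p = 0 ∧
      Real.sqrt (1 - θ / θc) < p ∧
      ∀ q ∈ Set.Ioo (0 : ℝ) 1, FlogD θ θc q = 0 → q = p := by
  have hθc0 : 0 < θc := hθ.trans hθc
  obtain ⟨p, hp, hfp⟩ := FlogD.exists_eq_zero_mem_Ioo hθ hθc
  have hp0 : 0 < p := (Real.sqrt_nonneg _).trans_lt hp.1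
  refine ⟨p, ⟨hp0, hp.2⟩, hfp, hp.1, fun q hq hfq => ?_⟩
  have hqa : √(1 - θ / θc) < q := by
    by_contra! hle
    exact (FlogD.neg_of_mem_Ioc hθ hθc0 ⟨hq.1, hle⟩).ne hfq
  exact (FlogD.strictMonoOn_Ico hθc0).injOn ⟨hqa.le, hq.2⟩ (Ioo_subset_Ico_self hp)
    (hfq.trans hfp.symm)
end

section
/- Let γ ≥ 1 be a real number and let h : [-1,1] → ℝ be continuously differentiable with h(1) ≠ 0 and h(-1) ≠ 0. Define f(s) = h(s)/(1-s²)^γ for s ∈ (-1,1). Then there exists a constant C > 0 such that |f'(s)| ≤ C(|f(s)|² + 1) for all s ∈ (-1,1); that is, singular nonlinearities of the form h(s)/(1-s²)^γ with γ ≥ 1 satisfy the growth condition |F''(s)| ≤ C(|F'(s)|² + 1) used for the three-dimensional strict separation property. -/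
open Set Real

/-! With `u = 1 - s²`, the derivative `f' = (h' u + 2γ s h) u^(-γ-1)` is `O(u^(-γ-1))`, and
`u^(-γ-1) = u^(γ-1) / u^(2γ) ≤ 1 / u^(2γ)` because `γ ≥ 1`. The continuous function
`h² + u^(2γ)` is positive on `[-1, 1]` (at `±1` because `h(±1) ≠ 0`), hence bounded below by
some `c > 0`, so `1 / u^(2γ) ≤ (h² + u^(2γ)) / (c u^(2γ)) = (f² + 1) / c`. -/

theorem HasDerivAt.div_rpow_const {f g : ℝ → ℝ} {f' g' x : ℝ} (p : ℝ) (hf : HasDerivAt f f' x)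
    (hg : HasDerivAt g g' x) (hgx : 0 < g x) :
    HasDerivAt (fun t => f t / g t ^ p) ((f' * g x - p * f x * g') * g x ^ (-p - 1)) x := by
  have hgp : 0 < g x ^ p := rpow_pos_of_pos hgx p
  refine (hf.div (hg.rpow_const (Or.inl hgx.ne')) hgp.ne').congr_deriv ?_
  rw [rpow_sub_one hgx.ne', rpow_sub_one hgx.ne', rpow_neg hgx.le]
  field_simp

theorem rpow_neg_sub_one_le_of_le_sq_add_rpow {u x c γ : ℝ} (hu : 0 < u) (hu1 : u ≤ 1)
    (hγ : 1 ≤ γ) (hc : 0 < c) (hcx : c ≤ x ^ 2 + u ^ (2 * γ)) :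
    u ^ (-γ - 1) ≤ (|x / u ^ γ| ^ 2 + 1) / c := by
  have hP : 0 < u ^ γ := rpow_pos_of_pos hu γ
  have hsq : u ^ (2 * γ) = (u ^ γ) ^ 2 := by
    rw [← rpow_natCast, ← rpow_mul hu.le, mul_comm]; norm_num
  have hsplit : u ^ (-γ - 1) = u ^ (γ - 1) / (u ^ γ) ^ 2 := by
    rw [← hsq, eq_div_iff (by positivity), ← rpow_add hu]
    ring_nf
  have hle1 : u ^ (γ - 1) ≤ 1 := rpow_le_one hu.le hu1 (by linarith)
  rw [hsq] at hcx
  rw [hsplit, sq_abs, div_pow, div_le_div_iff₀ (by positivity) hc]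
  calc u ^ (γ - 1) * c ≤ 1 * (x ^ 2 + (u ^ γ) ^ 2) := by gcongr
    _ = _ := by field_simp

theorem exists_pos_le_sq_add_one_sub_sq_rpow {h : ℝ → ℝ} (hh : ContinuousOn h (Icc (-1) 1))
    (h1 : h 1 ≠ 0) (hm1 : h (-1) ≠ 0) {p : ℝ} (hp : 0 ≤ p) :
    ∃ c > 0, ∀ s ∈ Icc (-1 : ℝ) 1, c ≤ h s ^ 2 + (1 - s ^ 2) ^ p := by
  refine isCompact_Icc.exists_forall_le' ((hh.pow 2).add ?_) fun s hs => ?_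
  · exact (continuousOn_const.sub (continuousOn_id.pow 2)).rpow_const fun _ _ => Or.inr hp
  show 0 < h s ^ 2 + (1 - s ^ 2) ^ p
  by_cases hs0 : h s = 0
  · have hs1 : s ≠ 1 := by rintro rfl; exact h1 hs0
    have hsm1 : s ≠ -1 := by rintro rfl; exact hm1 hs0
    have hu : 0 < 1 - s ^ 2 := by
      have := lt_of_le_of_ne hs.1 hsm1.symm
      have := lt_of_le_of_ne hs.2 hs1
      nlinarith
    rw [hs0]; positivity
  · have hu : 0 ≤ 1 - s ^ 2 := by nlinarith [hs.1, hs.2]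
    positivity

theorem exists_abs_deriv_div_one_sub_sq_rpow_le {h : ℝ → ℝ} {γ : ℝ} (hγ : 0 ≤ γ)
    (hh : ContDiffOn ℝ 1 h (Icc (-1) 1)) :
    ∃ K > 0, ∀ s ∈ Ioo (-1 : ℝ) 1,
      |deriv (fun t => h t / (1 - t ^ 2) ^ γ) s| ≤ K * (1 - s ^ 2) ^ (-γ - 1) := by
  obtain ⟨M, hM⟩ := isCompact_Icc.exists_bound_of_continuousOn hh.continuousOn
  obtain ⟨M', hM'⟩ := isCompact_Icc.exists_bound_of_continuousOn
    (hh.continuousOn_derivWithin (uniqueDiffOn_Icc (by norm_num)) le_rfl)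
  have hM0 : 0 ≤ M := (norm_nonneg _).trans (hM 1 (by norm_num))
  have hM'0 : 0 ≤ M' := (norm_nonneg _).trans (hM' 1 (by norm_num))
  refine ⟨M' + 2 * γ * M + 1, by positivity, fun s hs => ?_⟩
  set h' := derivWithin h (Icc (-1 : ℝ) 1)
  have hsI : s ∈ Icc (-1 : ℝ) 1 := Ioo_subset_Icc_self hs
  have hu : 0 < 1 - s ^ 2 := by nlinarith [hs.1, hs.2]
  have hhs : HasDerivAt h (h' s) s :=
    (hh.differentiableOn one_ne_zero s hsI).hasDerivWithinAt.hasDerivAt (Icc_mem_nhds hs.1 hs.2)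
  have hus : HasDerivAt (fun t => 1 - t ^ 2) (-(2 * s)) s := by
    simpa using (hasDerivAt_pow 2 s).const_sub 1
  have habs : |s| ≤ 1 := abs_le.2 ⟨hs.1.le, hs.2.le⟩
  have habsu : |1 - s ^ 2| ≤ 1 := by rw [abs_of_pos hu]; nlinarith
  have hnum : |h' s * (1 - s ^ 2) - γ * h s * -(2 * s)| ≤ M' + 2 * γ * M + 1 :=
    calc _ = |h' s * (1 - s ^ 2) + 2 * γ * (h s * s)| := by ring_nf
      _ ≤ |h' s| * |1 - s ^ 2| + 2 * γ * (|h s| * |s|) := by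
          grw [abs_add_le]
          rw [abs_mul, abs_mul, abs_mul, abs_mul, abs_two, abs_of_nonneg hγ]
      _ ≤ M' * 1 + 2 * γ * (M * 1) := by gcongr; exacts [hM' s hsI, hM s hsI]
      _ ≤ M' + 2 * γ * M + 1 := by linarith
  rw [(hhs.div_rpow_const γ hus hu).deriv, abs_mul, abs_of_pos (rpow_pos_of_pos hu _)]
  gcongr

/-- Singular nonlinearities of the form `f(s) = h(s)/(1-s²)^γ` with `γ ≥ 1` and
`h ∈ C¹([-1,1])`, `h(±1) ≠ 0`, satisfy the growth condition `|f'(s)| ≤ C(|f(s)|² + 1)`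
on `(-1,1)` (the condition `|F''| ≤ C(|F'|² + 1)` used for the three-dimensional strict
separation property, with `f` playing the role of `F'`). Here `(1-s²)^γ` denotes the
real power of the positive number `1-s²`. -/
theorem stmt9 (γ : ℝ) (hγ : 1 ≤ γ) (h : ℝ → ℝ)
    (hh : ContDiffOn ℝ 1 h (Set.Icc (-1 : ℝ) 1))
    (h1 : h 1 ≠ 0) (hm1 : h (-1) ≠ 0) :
    ∃ C : ℝ, 0 < C ∧ ∀ s ∈ Set.Ioo (-1 : ℝ) 1,
      |deriv (fun t : ℝ => h t / (1 - t ^ 2) ^ γ) s| ≤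
        C * (|h s / (1 - s ^ 2) ^ γ| ^ 2 + 1) := by
  obtain ⟨K, hK, hderiv⟩ := exists_abs_deriv_div_one_sub_sq_rpow_le (by linarith) hh
  obtain ⟨c, hc, hgc⟩ :=
    exists_pos_le_sq_add_one_sub_sq_rpow hh.continuousOn h1 hm1 (by linarith : 0 ≤ 2 * γ)
  refine ⟨K / c, by positivity, fun s hs => ?_⟩
  have hu : 0 < 1 - s ^ 2 := by nlinarith [hs.1, hs.2]
  calc _ ≤ K * (1 - s ^ 2) ^ (-γ - 1) := hderiv s hs
    _ ≤ K * ((|h s / (1 - s ^ 2) ^ γ| ^ 2 + 1) / c) := by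
        gcongr
        exact rpow_neg_sub_one_le_of_le_sq_add_rpow hu (by nlinarith) hγ hc
          (hgc s (Ioo_subset_Icc_self hs))
    _ = _ := by ring
end

section
/- Let l > 0, T > 0, Γ_s > 0, let F, G : ℝ → ℝ be continuously differentiable, and let φ : [0,l] × (0,T) → ℝ be such that φ, ∂_t φ, ∂_x φ, ∂_x² φ, ∂_t ∂_x φ = ∂_x ∂_t φ exist and are jointly continuous, and such that, writing μ := -∂_x² φ + F'(φ), also ∂_x μ and ∂_x² μ exist and are jointly continuous on [0,l] × (0,T). Assume ∂_t φ = ∂_x² μ on [0,l] × (0,T), with boundary conditions ∂_x μ(0,t) = ∂_x μ(l,t) = 0, (1/Γ_s) ∂_t φ(0,t) - ∂_x φ(0,t) + G'(φ(0,t)) = 0 and (1/Γ_s) ∂_t φ(l,t) + ∂_x φ(l,t) + G'(φ(l,t)) = 0 for all t ∈ (0,T). Then for every t ∈ (0,T) the total energy E(t) = ∫₀^l [(1/2)(∂_x φ(x,t))² + F(φ(x,t))] dx + G(φ(0,t)) + G(φ(l,t)) is differentiable in t with d/dt E(t) = -∫₀^l (∂_x μ(x,t))² dx - (1/Γ_s)[(∂_t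 φ(0,t))² + (∂_t φ(l,t))²]. -/
open Set MeasureTheory Filter

/-! Since the time derivative of the energy density is jointly continuous, it is bounded on
compact neighbourhoods and the energy may be differentiated under the integral sign:
`E' = ∫ (φx φtx + F'(φ) φt) + G'(φ) φt |_{x = 0, l}`. Integrating `φx φtx` by parts produces
the boundary term `[φx φt]₀ˡ` and `-∫ φxx φt`, so that the bulk part becomes `∫ μ φt = ∫ μ μxx`;
a second integration by parts together with the no-flux condition turns this into `-∫ μx²`.
Finally the dynamic boundary condition combines `[φx φt]₀ˡ` with the `G'` terms into
`-(1/Γs)(φt(0)² + φt(l)²)`. -/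

theorem hasDerivAt_intervalIntegral_of_continuousOn
    {E : Type*} [NormedAddCommGroup E] [NormedSpace ℝ E] [CompleteSpace E]
    {a b t : ℝ} (hab : a ≤ b) {U : Set ℝ} (hU : IsOpen U) (ht : t ∈ U) {f f' : ℝ → ℝ → E}
    (hf : ContinuousOn (fun p : ℝ × ℝ => f p.1 p.2) (Icc a b ×ˢ U))
    (hf' : ContinuousOn (fun p : ℝ × ℝ => f' p.1 p.2) (Icc a b ×ˢ U))
    (hdf : ∀ x ∈ Icc a b, ∀ τ ∈ U, HasDerivAt (fun τ => f x τ) (f' x τ) τ) :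
    HasDerivAt (fun τ => ∫ x in a..b, f x τ) (∫ x in a..b, f' x t) t := by
  have hIoc : uIoc a b ⊆ Icc a b := uIoc_of_le hab ▸ Ioc_subset_Icc_self
  have hint : ∀ {g : ℝ → E}, ContinuousOn g (Icc a b) → IntervalIntegrable g volume a b :=
    fun hg => hg.intervalIntegrable_of_Icc hab
  obtain ⟨ε, hε, hball⟩ := Metric.isOpen_iff.1 hU t ht
  have hclosedBall : Metric.closedBall t (ε / 2) ⊆ U :=
    (Metric.closedBall_subset_ball (half_lt_self hε)).trans hball
  have hK : IsCompact (Icc a b ×ˢ Metric.closedBall t (ε / 2)) :=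
    isCompact_Icc.prod (isCompact_closedBall t (ε / 2))
  obtain ⟨C, hC⟩ := hK.exists_bound_of_continuousOn (hf'.mono (prod_mono_right hclosedBall))
  have hsub : Metric.ball t (ε / 2) ⊆ U := Metric.ball_subset_closedBall.trans hclosedBall
  refine (intervalIntegral.hasDerivAt_integral_of_dominated_loc_of_deriv_le
    (F := fun τ x => f x τ) (F' := fun τ x => f' x τ) (bound := fun _ => C)
    (Metric.ball_mem_nhds t (half_pos hε)) ?_ (hint (hf.uncurry_right t ht)) ?_ ?_
    intervalIntegrable_const ?_).2
  · filter_upwards [hU.mem_nhds ht] with τ hτ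
    exact (hint (hf.uncurry_right τ hτ)).def'.aestronglyMeasurable
  · exact (hint (hf'.uncurry_right t ht)).def'.aestronglyMeasurable
  · refine Eventually.of_forall fun x hx τ hτ => hC (x, τ) ⟨hIoc hx, ?_⟩
    exact Metric.ball_subset_closedBall hτ
  · exact Eventually.of_forall fun x hx τ hτ => hdf x (hIoc hx) τ (hsub hτ)

theorem hasDerivAt_half_sq_add_comp {F : ℝ → ℝ} (hF : Differentiable ℝ F) {p q : ℝ → ℝ}
    {p' q' τ : ℝ} (hp : HasDerivAt p p' τ) (hq : HasDerivAt q q' τ) :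
    HasDerivAt (fun τ => 1 / 2 * q τ ^ 2 + F (p τ)) (q τ * q' + deriv F (p τ) * p') τ :=
  (((hq.pow 2).const_mul (1 / 2)).add ((hF (p τ)).hasDerivAt.comp τ hp)).congr_deriv
    (by ring)

theorem integral_energy_rate_eq_boundary_sub_dissipation {a b : ℝ} (hab : a ≤ b)
    {g ux uxx ut utx mx mxx : ℝ → ℝ}
    (hux : ∀ x ∈ Icc a b, HasDerivAt ux (uxx x) x)
    (hut : ∀ x ∈ Icc a b, HasDerivAt ut (utx x) x)
    (hm : ∀ x ∈ Icc a b, HasDerivAt (fun y => -uxx y + g y) (mx x) x)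
    (hmx : ∀ x ∈ Icc a b, HasDerivAt mx (mxx x) x)
    (huxx : IntervalIntegrable uxx volume a b) (hutx : IntervalIntegrable utx volume a b)
    (hmxx : IntervalIntegrable mxx volume a b)
    (hpde : ∀ x ∈ Icc a b, ut x = mxx x) (hfluxa : mx a = 0) (hfluxb : mx b = 0) :
    ∫ x in a..b, (ux x * utx x + g x * ut x) =
      ux b * ut b - ux a * ut a - ∫ x in a..b, mx x ^ 2 := by
  rw [← uIcc_of_le hab] at hux hut hm hmx hpde
  set μ := fun y => -uxx y + g y
  have hibp_u := intervalIntegral.integral_mul_deriv_eq_deriv_mul hux hut huxx hutx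
  have hibp_μ := intervalIntegral.integral_mul_deriv_eq_deriv_mul hm hmx
    (HasDerivAt.continuousOn hmx).intervalIntegrable hmxx
  have hsplit : ∫ x in a..b, (ux x * utx x + g x * ut x) =
      ∫ x in a..b, (ux x * utx x + (uxx x * ut x + μ x * mxx x)) := by
    refine intervalIntegral.integral_congr fun x hx => ?_
    simp only [μ, ← hpde x hx]
    ring
  have hint₁ := hutx.continuousOn_mul (HasDerivAt.continuousOn hux)
  have hint₂ := huxx.mul_continuousOn (HasDerivAt.continuousOn hut)
  have hint₃ := hmxx.continuousOn_mul (HasDerivAt.continuousOn hm)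
  rw [hsplit, intervalIntegral.integral_add hint₁ (hint₂.add hint₃),
    intervalIntegral.integral_add hint₂ hint₃, hibp_u, hibp_μ, hfluxa, hfluxb]
  simp only [sq]
  ring

theorem stmt16_general (l T Γs : ℝ) (hl : 0 < l)
    (F G : ℝ → ℝ) (hF : ContDiff ℝ 1 F) (hG : ContDiff ℝ 1 G)
    (φ φt φx φxx φtx μx μxx : ℝ → ℝ → ℝ)
    (hφt : ∀ x ∈ Icc (0 : ℝ) l, ∀ t ∈ Ioo (0 : ℝ) T,
      HasDerivAt (fun τ => φ x τ) (φt x t) t)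
    (hφxx : ∀ x ∈ Icc (0 : ℝ) l, ∀ t ∈ Ioo (0 : ℝ) T,
      HasDerivAt (fun y => φx y t) (φxx x t) x)
    (hφtx : ∀ x ∈ Icc (0 : ℝ) l, ∀ t ∈ Ioo (0 : ℝ) T,
      HasDerivAt (fun τ => φx x τ) (φtx x t) t)
    (hφxt : ∀ x ∈ Icc (0 : ℝ) l, ∀ t ∈ Ioo (0 : ℝ) T,
      HasDerivAt (fun y => φt y t) (φtx x t) x)
    (hμx : ∀ x ∈ Icc (0 : ℝ) l, ∀ t ∈ Ioo (0 : ℝ) T,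
      HasDerivAt (fun y => -φxx y t + deriv F (φ y t)) (μx x t) x)
    (hμxx : ∀ x ∈ Icc (0 : ℝ) l, ∀ t ∈ Ioo (0 : ℝ) T,
      HasDerivAt (fun y => μx y t) (μxx x t) x)
    (hφc : ContinuousOn (fun p : ℝ × ℝ => φ p.1 p.2) (Icc (0 : ℝ) l ×ˢ Ioo (0 : ℝ) T))
    (hφtc : ContinuousOn (fun p : ℝ × ℝ => φt p.1 p.2) (Icc (0 : ℝ) l ×ˢ Ioo (0 : ℝ) T))
    (hφxc : ContinuousOn (fun p : ℝ × ℝ => φx p.1 p.2) (Icc (0 : ℝ) l ×ˢ Ioo (0 : ℝ) T))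
    (hφxxc : ContinuousOn (fun p : ℝ × ℝ => φxx p.1 p.2) (Icc (0 : ℝ) l ×ˢ Ioo (0 : ℝ) T))
    (hφtxc : ContinuousOn (fun p : ℝ × ℝ => φtx p.1 p.2) (Icc (0 : ℝ) l ×ˢ Ioo (0 : ℝ) T))
    (hμxxc : ContinuousOn (fun p : ℝ × ℝ => μxx p.1 p.2) (Icc (0 : ℝ) l ×ˢ Ioo (0 : ℝ) T))
    (hpde : ∀ x ∈ Icc (0 : ℝ) l, ∀ t ∈ Ioo (0 : ℝ) T, φt x t = μxx x t)
    (hbcflux : ∀ t ∈ Ioo (0 : ℝ) T, μx 0 t = 0 ∧ μx l t = 0)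
    (hbcdyn0 : ∀ t ∈ Ioo (0 : ℝ) T,
      (1 / Γs) * φt 0 t - φx 0 t + deriv G (φ 0 t) = 0)
    (hbcdynl : ∀ t ∈ Ioo (0 : ℝ) T,
      (1 / Γs) * φt l t + φx l t + deriv G (φ l t) = 0) :
    ∀ t ∈ Ioo (0 : ℝ) T,
      HasDerivAt
        (fun τ => (∫ x in (0 : ℝ)..l, (1 / 2 * (φx x τ) ^ 2 + F (φ x τ))) +
          G (φ 0 τ) + G (φ l τ))
        (-(∫ x in (0 : ℝ)..l, (μx x t) ^ 2) -
          (1 / Γs) * ((φt 0 t) ^ 2 + (φt l t) ^ 2)) t := by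
  intro t ht
  have hFd : Differentiable ℝ F := hF.differentiable one_ne_zero
  have hdensity : ContinuousOn (fun p : ℝ × ℝ => 1 / 2 * φx p.1 p.2 ^ 2 + F (φ p.1 p.2))
      (Icc 0 l ×ˢ Ioo 0 T) :=
    (continuousOn_const.mul (hφxc.pow 2)).add (hF.continuous.comp_continuousOn hφc)
  have hrate : ContinuousOn
      (fun p : ℝ × ℝ => φx p.1 p.2 * φtx p.1 p.2 + deriv F (φ p.1 p.2) * φt p.1 p.2)
      (Icc 0 l ×ˢ Ioo 0 T) :=
    (hφxc.mul hφtxc).add (((hF.continuous_deriv le_rfl).comp_continuousOn hφc).mul hφtc)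
  have hbulk := hasDerivAt_intervalIntegral_of_continuousOn hl.le isOpen_Ioo ht hdensity hrate
    (fun x hx τ hτ => hasDerivAt_half_sq_add_comp hFd (hφt x hx τ hτ) (hφtx x hx τ hτ))
  have hsurf : ∀ x ∈ Icc 0 l, HasDerivAt (fun τ => G (φ x τ)) (deriv G (φ x t) * φt x t) t :=
    fun x hx => ((hG.differentiable one_ne_zero) (φ x t)).hasDerivAt.comp t (hφt x hx t ht)
  have hbulk_rate := integral_energy_rate_eq_boundary_sub_dissipation hl.le
    (fun x hx => hφxx x hx t ht) (fun x hx => hφxt x hx t ht) (fun x hx => hμx x hx t ht)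
    (fun x hx => hμxx x hx t ht)
    ((hφxxc.uncurry_right t ht).intervalIntegrable_of_Icc hl.le)
    ((hφtxc.uncurry_right t ht).intervalIntegrable_of_Icc hl.le)
    ((hμxxc.uncurry_right t ht).intervalIntegrable_of_Icc hl.le)
    (fun x hx => hpde x hx t ht) (hbcflux t ht).1 (hbcflux t ht).2
  refine (((hbulk.add (hsurf 0 (left_mem_Icc.2 hl.le))).add
    (hsurf l (right_mem_Icc.2 hl.le)))).congr_deriv ?_
  rw [hbulk_rate]
  linear_combination φt 0 t * hbcdyn0 t ht + φt l t * hbcdynl t ht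

/-- Energy dissipation law for the one-dimensional Cahn–Hilliard equation `∂_t φ = ∂_x² μ`,
`μ = -∂_x² φ + F'(φ)` on `Ω = (0,l)` with no-flux condition `∂_x μ = 0` at `x = 0, l` and
the Allen–Cahn type dynamic boundary condition `(1/Γ_s)∂_t φ + ∂_n φ + G'(φ) = 0` (the
outward normal derivative `∂_n` being `-∂_x` at `x = 0` and `+∂_x` at `x = l`): the total
free energy `E(t) = ∫₀^l (1/2)(∂_x φ)² + F(φ) dx + G(φ(0,t)) + G(φ(l,t))` satisfies
`E'(t) = -∫₀^l (∂_x μ)² dx - (1/Γ_s)[(∂_t φ(0,t))² + (∂_t φ(l,t))²]`.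
Here `φt, φx, φxx, φtx, μx, μxx` denote `∂_t φ, ∂_x φ, ∂_x² φ, ∂_t ∂_x φ = ∂_x ∂_t φ,
∂_x μ, ∂_x² μ`, all jointly continuous on `[0,l] × (0,T)`. -/
theorem stmt16 (l T Γs : ℝ) (hl : 0 < l) (hT : 0 < T) (hΓs : 0 < Γs)
    (F G : ℝ → ℝ) (hF : ContDiff ℝ 1 F) (hG : ContDiff ℝ 1 G)
    (φ φt φx φxx φtx μx μxx : ℝ → ℝ → ℝ)
    (hφt : ∀ x ∈ Icc (0 : ℝ) l, ∀ t ∈ Ioo (0 : ℝ) T,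
      HasDerivAt (fun τ => φ x τ) (φt x t) t)
    (hφx : ∀ x ∈ Icc (0 : ℝ) l, ∀ t ∈ Ioo (0 : ℝ) T,
      HasDerivAt (fun y => φ y t) (φx x t) x)
    (hφxx : ∀ x ∈ Icc (0 : ℝ) l, ∀ t ∈ Ioo (0 : ℝ) T,
      HasDerivAt (fun y => φx y t) (φxx x t) x)
    (hφtx : ∀ x ∈ Icc (0 : ℝ) l, ∀ t ∈ Ioo (0 : ℝ) T,
      HasDerivAt (fun τ => φx x τ) (φtx x t) t)
    (hφxt : ∀ x ∈ Icc (0 : ℝ) l, ∀ t ∈ Ioo (0 : ℝ) T,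
      HasDerivAt (fun y => φt y t) (φtx x t) x)
    (hμx : ∀ x ∈ Icc (0 : ℝ) l, ∀ t ∈ Ioo (0 : ℝ) T,
      HasDerivAt (fun y => -φxx y t + deriv F (φ y t)) (μx x t) x)
    (hμxx : ∀ x ∈ Icc (0 : ℝ) l, ∀ t ∈ Ioo (0 : ℝ) T,
      HasDerivAt (fun y => μx y t) (μxx x t) x)
    (hφc : ContinuousOn (fun p : ℝ × ℝ => φ p.1 p.2) (Icc (0 : ℝ) l ×ˢ Ioo (0 : ℝ) T))
    (hφtc : ContinuousOn (fun p : ℝ × ℝ => φt p.1 p.2) (Icc (0 : ℝ) l ×ˢ Ioo (0 : ℝ) T))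
    (hφxc : ContinuousOn (fun p : ℝ × ℝ => φx p.1 p.2) (Icc (0 : ℝ) l ×ˢ Ioo (0 : ℝ) T))
    (hφxxc : ContinuousOn (fun p : ℝ × ℝ => φxx p.1 p.2) (Icc (0 : ℝ) l ×ˢ Ioo (0 : ℝ) T))
    (hφtxc : ContinuousOn (fun p : ℝ × ℝ => φtx p.1 p.2) (Icc (0 : ℝ) l ×ˢ Ioo (0 : ℝ) T))
    (hμxc : ContinuousOn (fun p : ℝ × ℝ => μx p.1 p.2) (Icc (0 : ℝ) l ×ˢ Ioo (0 : ℝ) T))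
    (hμxxc : ContinuousOn (fun p : ℝ × ℝ => μxx p.1 p.2) (Icc (0 : ℝ) l ×ˢ Ioo (0 : ℝ) T))
    (hpde : ∀ x ∈ Icc (0 : ℝ) l, ∀ t ∈ Ioo (0 : ℝ) T, φt x t = μxx x t)
    (hbcflux : ∀ t ∈ Ioo (0 : ℝ) T, μx 0 t = 0 ∧ μx l t = 0)
    (hbcdyn0 : ∀ t ∈ Ioo (0 : ℝ) T,
      (1 / Γs) * φt 0 t - φx 0 t + deriv G (φ 0 t) = 0)
    (hbcdynl : ∀ t ∈ Ioo (0 : ℝ) T,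
      (1 / Γs) * φt l t + φx l t + deriv G (φ l t) = 0) :
    ∀ t ∈ Ioo (0 : ℝ) T,
      HasDerivAt
        (fun τ => (∫ x in (0 : ℝ)..l, (1 / 2 * (φx x τ) ^ 2 + F (φ x τ))) +
          G (φ 0 τ) + G (φ l τ))
        (-(∫ x in (0 : ℝ)..l, (μx x t) ^ 2) -
          (1 / Γs) * ((φt 0 t) ^ 2 + (φt l t) ^ 2)) t :=
  stmt16_general l T Γs hl F G hF hG φ φt φx φxx φtx μx μxx hφt hφxx hφtx hφxt hμx hμxx hφc hφtc
    hφxc hφxxc hφtxc hμxxc hpde hbcflux hbcdyn0 hbcdynl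
end
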